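/- For natural numbers n and m with m > n, the weighted sum over ℓ from 1 to n of ℓ times the ratio of falling factorials (n(n-1)⋯(n-ℓ+1))/(m(m-1)⋯(m-ℓ+1)) equals n(m+1)/((m-n+1)(m-n+2)). -/

import Mathlib

/-!
Write `r(n, m, k) = n^(k) / m^(k)` for the ratio of falling factorials. Shifting both arguments
gives `r(n+1, m+1, k+1) = (n+1)/(m+1) · r(n, m, k)`, so after reindexing `k ↦ k+1` the plain sum
`U(n, m) = ∑ₖ r(n, m, k)` and the weighted sum `S(n, m) = ∑ₖ k · r(n, m, k)` satisfy
`U(n+1, m+1) = 1 + (n+1)/(m+1) · U(n, m)` and `S(n+1, m+1) = (n+1)/(m+1) · (S(n, m) + U(n, m))`.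
Induction on `n` then yields `U = (m+1)/(m-n+1)` and the closed form for `S`.
-/

open Finset

section DescFactorialRatio

variable {K : Type*} [Field K]

theorem succ_descFactorial_div_succ_descFactorial (n m k : ℕ) :
    ((n + 1).descFactorial (k + 1) / (m + 1).descFactorial (k + 1) : K) =
      (n + 1) / (m + 1) * (n.descFactorial k / m.descFactorial k) := by
  rw [Nat.succ_descFactorial_succ, Nat.succ_descFactorial_succ]
  push_cast
  exact mul_div_mul_comm _ _ _ _

variable [CharZero K]

theorem factorial_div_mul_factorial_div_eq_descFactorial_div {n m k : ℕ} (hkn : k ≤ n)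
    (hkm : k ≤ m) :
    (n.factorial / (n - k).factorial : K) * ((m - k).factorial / m.factorial) =
      n.descFactorial k / m.descFactorial k := by
  rw [← Nat.factorial_mul_descFactorial hkn, ← Nat.factorial_mul_descFactorial hkm]
  have hn : ((n - k).factorial : K) ≠ 0 := Nat.cast_ne_zero.2 (Nat.factorial_ne_zero _)
  have hm : ((m - k).factorial : K) ≠ 0 := Nat.cast_ne_zero.2 (Nat.factorial_ne_zero _)
  push_cast
  field_simp

theorem cast_sub_add_ne_zero {n m j : ℕ} (h : n ≤ m) (hj : 0 < j) : (m - n + j : K) ≠ 0 := by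
  rw [← Nat.cast_sub h, ← Nat.cast_add]
  exact Nat.cast_ne_zero.2 (by omega)

theorem sum_descFactorial_div_descFactorial {n m : ℕ} (h : n ≤ m) :
    ∑ k ∈ range (n + 1), (n.descFactorial k / m.descFactorial k : K) = (m + 1) / (m - n + 1) := by
  induction n generalizing m with
  | zero =>
    have hm : (m + 1 : K) ≠ 0 := Nat.cast_add_one_ne_zero m
    simp [hm]
  | succ n ih =>
    cases m with
    | zero => omega
    | succ m =>
      have hnm : (m - n + 1 : K) ≠ 0 := by
        simpa using cast_sub_add_ne_zero (K := K) (j := 1) (by omega : n ≤ m) one_pos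
      have hm : (m + 1 : K) ≠ 0 := Nat.cast_add_one_ne_zero m
      rw [sum_range_succ']
      simp only [succ_descFactorial_div_succ_descFactorial, ← mul_sum, ih (m := m) (by omega),
        Nat.descFactorial_zero, Nat.cast_one, div_one]
      push_cast
      rw [add_sub_add_right_eq_sub]
      field_simp
      ring

theorem sum_mul_descFactorial_div_descFactorial {n m : ℕ} (h : n ≤ m) :
    ∑ k ∈ range (n + 1), (k * (n.descFactorial k / m.descFactorial k) : K) =
      n * (m + 1) / ((m - n + 1) * (m - n + 2)) := by
  induction n generalizing m with
  | zero => simp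
  | succ n ih =>
    cases m with
    | zero => omega
    | succ m =>
      have hnm : (m - n + 1 : K) ≠ 0 := by
        simpa using cast_sub_add_ne_zero (K := K) (j := 1) (by omega : n ≤ m) one_pos
      have hnm' : (m - n + 2 : K) ≠ 0 := by
        simpa using cast_sub_add_ne_zero (K := K) (j := 2) (by omega : n ≤ m) two_pos
      have hm : (m + 1 : K) ≠ 0 := Nat.cast_add_one_ne_zero m
      rw [sum_range_succ']
      simp only [succ_descFactorial_div_succ_descFactorial, Nat.cast_zero, zero_mul, add_zero,
        Nat.cast_succ, mul_left_comm _ ((n + 1 : K) / (m + 1)), ← mul_sum, add_mul, one_mul,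
        sum_add_distrib, ih (m := m) (by omega), sum_descFactorial_div_descFactorial (by omega : n ≤ m)]
      rw [add_sub_add_right_eq_sub]
      field_simp
      ring

end DescFactorialRatio

/-- Weighted falling factorial sum identity: for `m > n`,
`∑_{ℓ=1}^{n} ℓ·(n!/(n-ℓ)!)·((m-ℓ)!/m!) = n(m+1)/((m-n+1)(m-n+2))`. -/
theorem weighted_falling_factorial_sum (n m : ℕ) (h : m > n) :
    ∑ ℓ ∈ Finset.Icc 1 n,
      (ℓ : ℝ) * (((n.factorial : ℝ) / ((n - ℓ).factorial : ℝ)) *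
        (((m - ℓ).factorial : ℝ) / (m.factorial : ℝ)))
      = (n : ℝ) * ((m : ℝ) + 1) /
          (((m : ℝ) - (n : ℝ) + 1) * ((m : ℝ) - (n : ℝ) + 2)) := by
  rw [← sum_mul_descFactorial_div_descFactorial h.le, range_eq_Ico,
    sum_eq_sum_Ico_succ_bot (Nat.succ_pos n), Nat.cast_zero, zero_mul, zero_add]
  refine sum_congr rfl fun k hk => ?_
  have hkn : k ≤ n := (mem_Icc.1 hk).2
  rw [factorial_div_mul_factorial_div_eq_descFactorial_div hkn (hkn.trans h.le)]
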